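/- arXiv:1710.01522 — 6 statements merged into one kernel-verified Lean document; each statement's English description precedes it below -/
import Mathlib

section
/- Let q ∈ ℂ \ {0,1} and let f₁, f₂, f₃, f be four pairwise distinct meromorphic functions each satisfying the q-difference Riccati equation g(qz) = (A(z) + g(z))/(1 - (q-1)z·g(z)). Then the cross ratio R(z) = [(f(z)-f₁(z))/(f(z)-f₂(z))] · [(f₃(z)-f₂(z))/(f₃(z)-f₁(z))] satisfies R(qz) = R(z). -/
/-!
With `t = (q - 1) z`, one step of the equation sends `g z` to `g (q z)` by the Möbius map
`w ↦ (w + A) / (1 - t w)` of determinant `1 + t A`, and two solutions satisfy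
`(x' - y') (1 - t x) (1 - t y) = (x - y) (1 + t A)`. When the determinant is nonzero no value
is a pole, and the factors `1 - t x` cancel from the cross ratio. When it vanishes the map is
degenerate: the only pole is `1 / t` and every other value goes to a single point, so the
nondegeneracy of the two cross ratios forces coincidences that make both sides agree.
-/

/-- `x'` is the value after one step of `g (q z) (1 - (q - 1) z g z) = A z + g z`, with
`t = (q - 1) z` and `x = g z`. -/
def RiccatiStep {K : Type*} [Field K] (t A x x' : K) : Prop :=
  x' * (1 - t * x) = A + x

def crossRatio {K : Type*} [Field K] (h₁ h₂ h₃ h₄ : K) : K :=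
  (h₄ - h₁) / (h₄ - h₂) * ((h₃ - h₂) / (h₃ - h₁))

theorem eq_of_one_sub_mul_eq_zero {K : Type*} [Field K] {t x y : K}
    (hx : 1 - t * x = 0) (hy : 1 - t * y = 0) : x = y := by
  have ht : t ≠ 0 := by
    rintro rfl
    simp at hx
  exact mul_left_cancel₀ ht (by linear_combination hy - hx)

namespace RiccatiStep

variable {K : Type*} [Field K] {t A : K}

theorem sub_mul_mul {x y x' y' : K} (hx : RiccatiStep t A x x') (hy : RiccatiStep t A y y') :
    (x' - y') * (1 - t * x) * (1 - t * y) = (x - y) * (1 + t * A) := by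
  unfold RiccatiStep at hx hy
  linear_combination (1 - t * y) * hx - (1 - t * x) * hy

theorem one_add_mul_eq_zero {x x' : K} (hx : RiccatiStep t A x x') (hpole : 1 - t * x = 0) :
    1 + t * A = 0 := by
  unfold RiccatiStep at hx
  linear_combination (1 + t * x') * hpole - t * hx

theorem eq_of_one_add_mul_eq_zero {x y x' y' : K} (hx : RiccatiStep t A x x')
    (hy : RiccatiStep t A y y') (hdet : 1 + t * A = 0) (hDx : 1 - t * x ≠ 0)
    (hDy : 1 - t * y ≠ 0) : x' = y' := by
  have h := sub_mul_mul hx hy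
  rw [hdet, mul_zero] at h
  simpa [hDx, hDy, sub_eq_zero] using h

variable {x₁ x₂ x₃ x₄ x₁' x₂' x₃' x₄' : K}
  (h₁ : RiccatiStep t A x₁ x₁') (h₂ : RiccatiStep t A x₂ x₂')
  (h₃ : RiccatiStep t A x₃ x₃') (h₄ : RiccatiStep t A x₄ x₄')
include h₁ h₂ h₃ h₄

theorem cross_mul_eq_of_one_add_mul_ne_zero (hdet : 1 + t * A ≠ 0) :
    (x₄' - x₁') * (x₃' - x₂') * ((x₄ - x₂) * (x₃ - x₁)) =
      (x₄ - x₁) * (x₃ - x₂) * ((x₄' - x₂') * (x₃' - x₁')) := by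
  have hD : (1 - t * x₁) * (1 - t * x₂) * (1 - t * x₃) * (1 - t * x₄) ≠ 0 := by
    simp only [mul_ne_zero_iff]
    exact ⟨⟨⟨mt h₁.one_add_mul_eq_zero hdet, mt h₂.one_add_mul_eq_zero hdet⟩,
      mt h₃.one_add_mul_eq_zero hdet⟩, mt h₄.one_add_mul_eq_zero hdet⟩
  apply mul_right_cancel₀ hD
  linear_combination
    ((x₃' - x₂') * (1 - t * x₃) * (1 - t * x₂) * (x₄ - x₂) * (x₃ - x₁)) * sub_mul_mul h₄ h₁
    + ((x₄ - x₁) * (1 + t * A) * (x₄ - x₂) * (x₃ - x₁)) * sub_mul_mul h₃ h₂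
    - ((x₃' - x₁') * (1 - t * x₃) * (1 - t * x₁) * (x₄ - x₁) * (x₃ - x₂)) * sub_mul_mul h₄ h₂
    - ((x₄ - x₂) * (1 + t * A) * (x₄ - x₁) * (x₃ - x₂)) * sub_mul_mul h₃ h₁

theorem cross_mul_eq_of_one_add_mul_eq_zero (hdet : 1 + t * A = 0)
    (h42 : x₄ - x₂ ≠ 0) (h31 : x₃ - x₁ ≠ 0) (h42' : x₄' - x₂' ≠ 0) (h31' : x₃' - x₁' ≠ 0) :
    (x₄' - x₁') * (x₃' - x₂') * ((x₄ - x₂) * (x₃ - x₁)) =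
      (x₄ - x₁) * (x₃ - x₂) * ((x₄' - x₂') * (x₃' - x₁')) := by
  have pole_of_image_ne {x y x' y' : K} (hx : RiccatiStep t A x x') (hy : RiccatiStep t A y y')
      (hxy' : x' - y' ≠ 0) : (1 - t * x) * (1 - t * y) = 0 := by
    have h := sub_mul_mul hx hy
    rw [hdet, mul_zero, mul_assoc] at h
    exact (mul_eq_zero.mp h).resolve_left hxy'
  have not_pole {x y : K} (hxy : x ≠ y) (hy : 1 - t * y = 0) : 1 - t * x ≠ 0 :=
    fun hx ↦ hxy (eq_of_one_sub_mul_eq_zero hx hy)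
  rw [sub_ne_zero] at h42 h31
  rcases mul_eq_zero.mp (pole_of_image_ne h₄ h₂ h42') with hD₄ | hD₂ <;>
    rcases mul_eq_zero.mp (pole_of_image_ne h₃ h₁ h31') with hD₃ | hD₁
  · obtain rfl := eq_of_one_add_mul_eq_zero h₂ h₁ hdet
      (not_pole h42.symm hD₄) (not_pole h31.symm hD₃)
    obtain rfl := eq_of_one_sub_mul_eq_zero hD₄ hD₃
    ring
  · obtain rfl := eq_of_one_add_mul_eq_zero h₂ h₃ hdet
      (not_pole h42.symm hD₄) (not_pole h31 hD₁)
    obtain rfl := eq_of_one_sub_mul_eq_zero hD₄ hD₁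
    ring
  · obtain rfl := eq_of_one_add_mul_eq_zero h₄ h₁ hdet
      (not_pole h42 hD₂) (not_pole h31.symm hD₃)
    obtain rfl := eq_of_one_sub_mul_eq_zero hD₂ hD₃
    ring
  · obtain rfl := eq_of_one_add_mul_eq_zero h₄ h₃ hdet
      (not_pole h42 hD₂) (not_pole h31 hD₁)
    obtain rfl := eq_of_one_sub_mul_eq_zero hD₂ hD₁
    ring

theorem crossRatio_eq (h42 : x₄ - x₂ ≠ 0) (h31 : x₃ - x₁ ≠ 0) (h42' : x₄' - x₂' ≠ 0)
    (h31' : x₃' - x₁' ≠ 0) : crossRatio x₁' x₂' x₃' x₄' = crossRatio x₁ x₂ x₃ x₄ := by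
  unfold crossRatio
  rw [div_mul_div_comm, div_mul_div_comm,
    div_eq_div_iff (mul_ne_zero h42' h31') (mul_ne_zero h42 h31)]
  by_cases hdet : 1 + t * A = 0
  · exact cross_mul_eq_of_one_add_mul_eq_zero h₁ h₂ h₃ h₄ hdet h42 h31 h42' h31'
  · exact cross_mul_eq_of_one_add_mul_ne_zero h₁ h₂ h₃ h₄ hdet

end RiccatiStep

theorem stmt_2_general (q : ℂ) (A f₁ f₂ f₃ f : ℂ → ℂ)
    (h1 : ∀ z, f₁ (q * z) * (1 - (q - 1) * z * f₁ z) = A z + f₁ z)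
    (h2 : ∀ z, f₂ (q * z) * (1 - (q - 1) * z * f₂ z) = A z + f₂ z)
    (h3 : ∀ z, f₃ (q * z) * (1 - (q - 1) * z * f₃ z) = A z + f₃ z)
    (hf : ∀ z, f (q * z) * (1 - (q - 1) * z * f z) = A z + f z) :
    ∀ z, f z - f₂ z ≠ 0 → f₃ z - f₁ z ≠ 0 →
      f (q * z) - f₂ (q * z) ≠ 0 → f₃ (q * z) - f₁ (q * z) ≠ 0 →
      (f (q * z) - f₁ (q * z)) / (f (q * z) - f₂ (q * z)) *
        ((f₃ (q * z) - f₂ (q * z)) / (f₃ (q * z) - f₁ (q * z))) =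
      (f z - f₁ z) / (f z - f₂ z) * ((f₃ z - f₂ z) / (f₃ z - f₁ z)) :=
  fun z ↦ RiccatiStep.crossRatio_eq (h1 z) (h2 z) (h3 z) (hf z)

theorem stmt_2 (q : ℂ) (hq0 : q ≠ 0) (hq1 : q ≠ 1) (A f₁ f₂ f₃ f : ℂ → ℂ)
    (hne : f₁ ≠ f₂ ∧ f₁ ≠ f₃ ∧ f₁ ≠ f ∧ f₂ ≠ f₃ ∧ f₂ ≠ f ∧ f₃ ≠ f)
    (h1 : ∀ z, f₁ (q * z) * (1 - (q - 1) * z * f₁ z) = A z + f₁ z)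
    (h2 : ∀ z, f₂ (q * z) * (1 - (q - 1) * z * f₂ z) = A z + f₂ z)
    (h3 : ∀ z, f₃ (q * z) * (1 - (q - 1) * z * f₃ z) = A z + f₃ z)
    (hf : ∀ z, f (q * z) * (1 - (q - 1) * z * f z) = A z + f z) :
    ∀ z, f z - f₂ z ≠ 0 → f₃ z - f₁ z ≠ 0 →
      f (q * z) - f₂ (q * z) ≠ 0 → f₃ (q * z) - f₁ (q * z) ≠ 0 →
      (f (q * z) - f₁ (q * z)) / (f (q * z) - f₂ (q * z)) *
        ((f₃ (q * z) - f₂ (q * z)) / (f₃ (q * z) - f₁ (q * z))) =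
      (f z - f₁ z) / (f z - f₂ z) * ((f₃ z - f₂ z) / (f₃ z - f₁ z)) :=
  stmt_2_general q A f₁ f₂ f₃ f h1 h2 h3 hf
end

section
/- Let q ∈ ℂ \ {0} with |q| ≠ 1, let A be meromorphic with A(z) ≢ -1/((q-1)z), and suppose f₀, f₁, f₂ are three distinct meromorphic solutions of the q-difference Riccati equation f(qz) = (A(z)+f(z))/(1-(q-1)z·f(z)). Setting u_j(z) = 1/(f_j(z) - f₀(z)) for j = 1,2, the functions u₁ and u₂ are two distinct meromorphic solutions of the linear equation [1+(q-1)z·f₀(qz)]·u(qz) - [1-(q-1)z·f₀(z)]·u(z) + (q-1)z = 0, and u₀ = u₁ - u₂ is a nonzero solution of the homogeneous equation [1+(q-1)z·f₀(qz)]·u(qz) - [1-(q-1)z·f₀(z)]·u(z) = 0. -/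
/-!
Subtracting the Riccati equations of `f` and `f₀` and dividing by `(f - f₀)(z)·(f - f₀)(qz)`
shows that `u = 1/(f - f₀)` satisfies a linear first-order `q`-difference equation, whose
inhomogeneous term `(q - 1)z` does not depend on `f`; hence the difference of two such `u`
solves the homogeneous equation. Since inversion is injective (also with `0⁻¹ = 0`), distinct
solutions `f` give distinct `u`.
-/

section Riccati

variable {K : Type*} [Field K]

theorem inv_sub_linear_of_riccati {c a x x' y y' : K}
    (hx : x' * (1 - c * x) = a + x) (hy : y' * (1 - c * y) = a + y)
    (hne : y ≠ x) (hne' : y' ≠ x') :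
    (1 + c * x') * (y' - x')⁻¹ - (1 - c * x) * (y - x)⁻¹ + c = 0 := by
  have hd : y - x ≠ 0 := sub_ne_zero.mpr hne
  have hd' : y' - x' ≠ 0 := sub_ne_zero.mpr hne'
  field_simp
  linear_combination hx - hy

theorem injective_inv_sub {α : Type*} (g : α → K) :
    Function.Injective fun f : α → K => fun z => (f z - g z)⁻¹ := by
  intro f₁ f₂ h
  funext z
  simpa using inv_injective (congrFun h z)

end Riccati

theorem stmt_6_general (q : ℂ) (A f₀ f₁ f₂ : ℂ → ℂ)
    (hne : f₀ ≠ f₁ ∧ f₀ ≠ f₂ ∧ f₁ ≠ f₂)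
    (h0 : ∀ z, f₀ (q * z) * (1 - (q - 1) * z * f₀ z) = A z + f₀ z)
    (h1 : ∀ z, f₁ (q * z) * (1 - (q - 1) * z * f₁ z) = A z + f₁ z)
    (h2 : ∀ z, f₂ (q * z) * (1 - (q - 1) * z * f₂ z) = A z + f₂ z) :
    (fun z => (f₁ z - f₀ z)⁻¹) ≠ (fun z => (f₂ z - f₀ z)⁻¹) ∧
    (∀ z, f₁ z ≠ f₀ z → f₁ (q * z) ≠ f₀ (q * z) →
      (1 + (q - 1) * z * f₀ (q * z)) * (f₁ (q * z) - f₀ (q * z))⁻¹ -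
        (1 - (q - 1) * z * f₀ z) * (f₁ z - f₀ z)⁻¹ + (q - 1) * z = 0) ∧
    (∀ z, f₂ z ≠ f₀ z → f₂ (q * z) ≠ f₀ (q * z) →
      (1 + (q - 1) * z * f₀ (q * z)) * (f₂ (q * z) - f₀ (q * z))⁻¹ -
        (1 - (q - 1) * z * f₀ z) * (f₂ z - f₀ z)⁻¹ + (q - 1) * z = 0) ∧
    (fun z => (f₁ z - f₀ z)⁻¹ - (f₂ z - f₀ z)⁻¹) ≠ 0 ∧
    (∀ z, f₁ z ≠ f₀ z → f₁ (q * z) ≠ f₀ (q * z) →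
        f₂ z ≠ f₀ z → f₂ (q * z) ≠ f₀ (q * z) →
      (1 + (q - 1) * z * f₀ (q * z)) *
          ((f₁ (q * z) - f₀ (q * z))⁻¹ - (f₂ (q * z) - f₀ (q * z))⁻¹) -
        (1 - (q - 1) * z * f₀ z) * ((f₁ z - f₀ z)⁻¹ - (f₂ z - f₀ z)⁻¹) = 0) := by
  have hu : (fun z => (f₁ z - f₀ z)⁻¹) ≠ (fun z => (f₂ z - f₀ z)⁻¹) :=
    (injective_inv_sub f₀).ne hne.2.2
  have hlin₁ := fun z => inv_sub_linear_of_riccati (h0 z) (h1 z)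
  have hlin₂ := fun z => inv_sub_linear_of_riccati (h0 z) (h2 z)
  refine ⟨hu, hlin₁, hlin₂, fun h => hu (sub_eq_zero.mp h), ?_⟩
  intro z hz₁ hqz₁ hz₂ hqz₂
  linear_combination hlin₁ z hz₁ hqz₁ - hlin₂ z hz₂ hqz₂

theorem stmt_6 (q : ℂ) (hq0 : q ≠ 0) (hq1 : ‖q‖ ≠ 1) (A f₀ f₁ f₂ : ℂ → ℂ)
    (hA : ∃ z : ℂ, z ≠ 0 ∧ A z ≠ -(1 / ((q - 1) * z)))
    (hne : f₀ ≠ f₁ ∧ f₀ ≠ f₂ ∧ f₁ ≠ f₂)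
    (h0 : ∀ z, f₀ (q * z) * (1 - (q - 1) * z * f₀ z) = A z + f₀ z)
    (h1 : ∀ z, f₁ (q * z) * (1 - (q - 1) * z * f₁ z) = A z + f₁ z)
    (h2 : ∀ z, f₂ (q * z) * (1 - (q - 1) * z * f₂ z) = A z + f₂ z) :
    (fun z => (f₁ z - f₀ z)⁻¹) ≠ (fun z => (f₂ z - f₀ z)⁻¹) ∧
    (∀ z, f₁ z ≠ f₀ z → f₁ (q * z) ≠ f₀ (q * z) →
      (1 + (q - 1) * z * f₀ (q * z)) * (f₁ (q * z) - f₀ (q * z))⁻¹ -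
        (1 - (q - 1) * z * f₀ z) * (f₁ z - f₀ z)⁻¹ + (q - 1) * z = 0) ∧
    (∀ z, f₂ z ≠ f₀ z → f₂ (q * z) ≠ f₀ (q * z) →
      (1 + (q - 1) * z * f₀ (q * z)) * (f₂ (q * z) - f₀ (q * z))⁻¹ -
        (1 - (q - 1) * z * f₀ z) * (f₂ z - f₀ z)⁻¹ + (q - 1) * z = 0) ∧
    (fun z => (f₁ z - f₀ z)⁻¹ - (f₂ z - f₀ z)⁻¹) ≠ 0 ∧
    (∀ z, f₁ z ≠ f₀ z → f₁ (q * z) ≠ f₀ (q * z) →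
        f₂ z ≠ f₀ z → f₂ (q * z) ≠ f₀ (q * z) →
      (1 + (q - 1) * z * f₀ (q * z)) *
          ((f₁ (q * z) - f₀ (q * z))⁻¹ - (f₂ (q * z) - f₀ (q * z))⁻¹) -
        (1 - (q - 1) * z * f₀ z) * ((f₁ z - f₀ z)⁻¹ - (f₂ z - f₀ z)⁻¹) = 0) :=
  stmt_6_general q A f₀ f₁ f₂ hne h0 h1 h2
end

section
/- Let q ∈ ℂ \ {0} with |q| ≠ 1 and let A be a meromorphic function. Suppose f₀ is a meromorphic solution of the q-difference Riccati equation f(qz) = (A(z)+f(z))/(1-(q-1)z·f(z)), and u is a meromorphic solution of [1+(q-1)z·f₀(qz)]·u(qz) - [1-(q-1)z·f₀(z)]·u(z) + (q-1)z = 0 with u ≢ 0. Then f(z) = 1/u(z) + f₀(z) is a meromorphic solution of the same q-difference Riccati equation. -/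
theorem riccati_inv_add_of_linear {K : Type*} [Field K] {a c y y' v v' : K}
    (hv : v ≠ 0) (hv' : v' ≠ 0) (hy : y' * (1 - c * y) = a + y)
    (hlin : (1 + c * y') * v' - (1 - c * y) * v + c = 0) :
    (v'⁻¹ + y') * (1 - c * (v⁻¹ + y)) = a + (v⁻¹ + y) := by
  field_simp
  linear_combination v' * v * hy - hlin

theorem stmt_7_general (q : ℂ) (A f₀ u : ℂ → ℂ)
    (h0 : ∀ z, f₀ (q * z) * (1 - (q - 1) * z * f₀ z) = A z + f₀ z)
    (hu : ∀ z, (1 + (q - 1) * z * f₀ (q * z)) * u (q * z) -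
      (1 - (q - 1) * z * f₀ z) * u z + (q - 1) * z = 0) :
    ∀ z, u z ≠ 0 → u (q * z) ≠ 0 →
      ((u (q * z))⁻¹ + f₀ (q * z)) * (1 - (q - 1) * z * ((u z)⁻¹ + f₀ z)) =
        A z + ((u z)⁻¹ + f₀ z) :=
  fun z hz hqz => riccati_inv_add_of_linear hz hqz (h0 z) (hu z)

theorem stmt_7 (q : ℂ) (hq0 : q ≠ 0) (hq1 : ‖q‖ ≠ 1) (A f₀ u : ℂ → ℂ)
    (h0 : ∀ z, f₀ (q * z) * (1 - (q - 1) * z * f₀ z) = A z + f₀ z)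
    (hu0 : u ≠ 0)
    (hu : ∀ z, (1 + (q - 1) * z * f₀ (q * z)) * u (q * z) -
      (1 - (q - 1) * z * f₀ z) * u z + (q - 1) * z = 0) :
    ∀ z, u z ≠ 0 → u (q * z) ≠ 0 →
      ((u (q * z))⁻¹ + f₀ (q * z)) * (1 - (q - 1) * z * ((u z)⁻¹ + f₀ z)) =
        A z + ((u z)⁻¹ + f₀ z) :=
  stmt_7_general q A f₀ u h0 hu
end

section
/- Let q ∈ ℂ \ {0} with |q| ≠ 1. Suppose f₀ = P/Q is a rational function with P, Q nonzero polynomials and deg P ≥ deg Q (so f₀ does not tend to 0 at infinity). Then the homogeneous q-difference equation [1+(q-1)z·f₀(qz)]·u(qz) - [1-(q-1)z·f₀(z)]·u(z) = 0 has no nonzero rational solution u. -/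
/-!
Compare leading coefficients of the two sides. Since `deg P ≥ deg Q`, the factors
`Q(qz) + (q-1) z P(qz)` and `Q(z) - (q-1) z P(z)` have leading coefficients `(q-1) p q^{deg P}`
and `-(q-1) p`, where `p` is the leading coefficient of `P`, while substituting `qz` multiplies
the leading coefficient of a polynomial `R` by `q^{deg R}`. For `U, V ≠ 0` this leaves
`q^a = -q^b` with `a = deg P + deg U` and `b = deg Q + deg V`; taking norms with `‖q‖ ≠ 1`
gives `a = b`, hence `q^a = 0`, which is impossible.
-/

open Polynomial

namespace Polynomial

variable {R : Type*} [Semiring R] [NoZeroDivisors R]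

theorem natDegree_comp_C_mul_X (p : R[X]) {r : R} (hr : r ≠ 0) :
    (p.comp (C r * X)).natDegree = p.natDegree := by
  rw [natDegree_comp, natDegree_C_mul_X r hr, mul_one]

theorem leadingCoeff_comp_C_mul_X (p : R[X]) {r : R} (hr : r ≠ 0) :
    (p.comp (C r * X)).leadingCoeff = p.leadingCoeff * r ^ p.natDegree := by
  rw [leadingCoeff_comp (by rw [natDegree_C_mul_X r hr]; exact one_ne_zero),
    leadingCoeff_C_mul_X]

theorem leadingCoeff_add_C_mul_X_mul {A P : R[X]} {c : R} (hc : c ≠ 0) (hP : P ≠ 0)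
    (hAP : A.natDegree ≤ P.natDegree) :
    (A + C c * X * P).leadingCoeff = c * P.leadingCoeff := by
  have hdeg : A.degree < (C c * X * P).degree := degree_lt_degree <| by
    have hcX : C c * X ≠ 0 := ne_zero_of_natDegree_gt (n := 0) (by simp [natDegree_C_mul_X c hc])
    rw [natDegree_mul hcX hP, natDegree_C_mul_X c hc]
    omega
  rw [leadingCoeff_add_of_degree_lt hdeg, leadingCoeff_mul, leadingCoeff_C_mul_X]

end Polynomial

theorem pow_ne_neg_pow {K : Type*} [NormedDivisionRing K] [CharZero K] {q : K} (hq0 : q ≠ 0)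
    (hq1 : ‖q‖ ≠ 1) (a b : ℕ) : q ^ a ≠ -q ^ b := by
  intro h
  have hab : a = b := pow_right_injective₀ (norm_pos_iff.mpr hq0) hq1 <| by
    simpa only [norm_pow, norm_neg] using congrArg norm h
  subst hab
  exact pow_ne_zero a hq0 (self_eq_neg.mp h)

/-- For `f₀ = P/Q` with `deg P ≥ deg Q`, the homogeneous equation
`[1+(q-1)z f₀(qz)]·u(qz) = [1-(q-1)z f₀(z)]·u(z)` has no nonzero rational
solution `u = U/V`; the equation is stated in cross-multiplied polynomial form. -/
theorem stmt_8 (q : ℂ) (hq0 : q ≠ 0) (hq1 : ‖q‖ ≠ 1) (P Q : Polynomial ℂ)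
    (hP : P ≠ 0) (hQ : Q ≠ 0) (hdeg : Q.degree ≤ P.degree) :
    ∀ U V : Polynomial ℂ, V ≠ 0 →
      (Q.comp (C q * X) + C (q - 1) * X * P.comp (C q * X)) *
          U.comp (C q * X) * Q * V =
        (Q - C (q - 1) * X * P) * U * Q.comp (C q * X) * V.comp (C q * X) →
      U = 0 := by
  intro U V hV heq
  by_contra hU
  have hq1' : q - 1 ≠ 0 := sub_ne_zero.mpr (by rintro rfl; simp at hq1)
  have hQP : Q.natDegree ≤ P.natDegree := natDegree_le_natDegree hdeg
  have hPq : P.comp (C q * X) ≠ 0 :=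
    (comp_C_mul_X_eq_zero_iff (mem_nonZeroDivisors_of_ne_zero hq0)).not.mpr hP
  have hlhs := leadingCoeff_add_C_mul_X_mul (A := Q.comp (C q * X)) hq1' hPq
    (by rwa [natDegree_comp_C_mul_X _ hq0, natDegree_comp_C_mul_X _ hq0])
  have hrhs := leadingCoeff_add_C_mul_X_mul (neg_ne_zero.mpr hq1') hP hQP
  rw [C_neg, neg_mul, neg_mul, ← sub_eq_add_neg] at hrhs
  have hlc := congrArg leadingCoeff heq
  simp only [leadingCoeff_mul, hlhs, hrhs, leadingCoeff_comp_C_mul_X _ hq0] at hlc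
  have hc : (q - 1) * P.leadingCoeff * U.leadingCoeff * Q.leadingCoeff * V.leadingCoeff ≠ 0 := by
    simp [hq1', hP, hU, hQ, hV]
  refine pow_ne_neg_pow hq0 hq1 (P.natDegree + U.natDegree) (Q.natDegree + V.natDegree)
    (mul_left_cancel₀ hc ?_)
  rw [pow_add, pow_add]
  linear_combination hlc
end

section
/- The q-difference equation (z² + 4z - 2)·u(z/2) + 2(z² + 2z + 1)·u(z) = 0 has no nonzero rational function solution u. -/
/-!
Compare leading coefficients. If `P, Q ≠ 0` have degrees `p, q`, the two summands of
`A · P(cz) · Q + B · P · Q(cz) = 0` must have opposite leading coefficients, which forces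
`lc(A) · cᵖ + lc(B) · c^q = 0`. For `A = z² + 4z - 2`, `B = 2(z + 1)²` and `c = 1/2` this reads
`(1/2)ᵖ + 2 · (1/2)^q = 0`, impossible since the left side is a positive real.
-/

open Polynomial

namespace Polynomial

variable {R : Type*} [CommRing R] [IsDomain R]

theorem leadingCoeff_comp_C_mul_X_s11 (P : R[X]) {c : R} (hc : c ≠ 0) :
    (P.comp (C c * X)).leadingCoeff = P.leadingCoeff * c ^ P.natDegree := by
  rw [leadingCoeff_comp (by rw [natDegree_C_mul_X c hc]; exact one_ne_zero),
    leadingCoeff_C_mul_X]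

theorem leadingCoeff_add_eq_zero_of_qDifference {A B P Q : R[X]} {c : R} (hc : c ≠ 0)
    (hP : P ≠ 0) (hQ : Q ≠ 0)
    (h : A * P.comp (C c * X) * Q + B * P * Q.comp (C c * X) = 0) :
    A.leadingCoeff * c ^ P.natDegree + B.leadingCoeff * c ^ Q.natDegree = 0 := by
  have hlc := congrArg leadingCoeff (eq_neg_of_add_eq_zero_left h)
  simp only [leadingCoeff_neg, leadingCoeff_mul, leadingCoeff_comp_C_mul_X_s11 _ hc] at hlc
  have hPQ : P.leadingCoeff * Q.leadingCoeff ≠ 0 :=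
    mul_ne_zero (leadingCoeff_ne_zero.2 hP) (leadingCoeff_ne_zero.2 hQ)
  exact (mul_eq_zero.1 (by linear_combination hlc :
    (A.leadingCoeff * c ^ P.natDegree + B.leadingCoeff * c ^ Q.natDegree) *
      (P.leadingCoeff * Q.leadingCoeff) = 0)).resolve_right hPQ

end Polynomial

/-- `(z²+4z-2)u(z/2) + 2(z²+2z+1)u(z) = 0` has no nonzero rational solution
`u = P/Q`, stated in cross-multiplied polynomial form. -/
theorem stmt_11 :
    ∀ P Q : Polynomial ℂ, Q ≠ 0 →
      (X ^ 2 + 4 * X - 2) * P.comp (C (1 / 2 : ℂ) * X) * Q +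
        2 * (X ^ 2 + 2 * X + 1) * P * Q.comp (C (1 / 2 : ℂ) * X) = 0 →
      P = 0 := by
  intro P Q hQ h
  by_contra hP
  have hA : (X ^ 2 + 4 * X - 2 : ℂ[X]).leadingCoeff = 1 := by monicity!
  have hB : (2 * (X ^ 2 + 2 * X + 1) : ℂ[X]).leadingCoeff = 2 := by
    rw [leadingCoeff_mul, (by monicity! : (X ^ 2 + 2 * X + 1 : ℂ[X]).Monic).leadingCoeff,
      mul_one, ← C_ofNat, leadingCoeff_C]
  have hsum := leadingCoeff_add_eq_zero_of_qDifference (by norm_num) hP hQ h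
  rw [hA, hB, one_mul] at hsum
  have hpos : (0 : ℝ) < (1 / 2) ^ P.natDegree + 2 * (1 / 2) ^ Q.natDegree := by positivity
  exact hpos.ne' (Complex.ofReal_eq_zero.1 (by push_cast; exact hsum))
end

section
/- Let q ∈ ℂ \ {0,1}, let A be meromorphic, and suppose f₁, f₂ are two distinct meromorphic solutions of the q-difference Riccati equation f(qz) = (A(z)+f(z))/(1-(q-1)z·f(z)). If f is any meromorphic solution of the Riccati equation distinct from f₁ and f₂, and h is defined by the Möbius relation f(z) = (f₁(z)·h(z) + f₂(z))/(h(z) + 1), then h satisfies the first order linear q-difference equation h(qz) = [(1-(q-1)z·f₁(z))/(1-(q-1)z·f₂(z))]·h(z). -/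
/-! The Riccati equation `W (1 - k w) = A + w` is a Möbius transformation `w ↦ W`, and for two
solutions the difference of the images satisfies `(W' - W)(1 - k w') = (1 + k W)(w' - w)`.
Applying this to the pairs `(f, f₂)` and `(f, f₁)` and dividing, the common factor `1 + k f(qz)`
cancels, which gives the linear equation for `h`. -/

theorem riccati_sub_mul {R : Type*} [CommRing R] {k A w w' W W' : R}
    (h : W * (1 - k * w) = A + w) (h' : W' * (1 - k * w') = A + w') :
    (W' - W) * (1 - k * w') = (1 + k * W) * (w' - w) := by
  linear_combination h' - h

theorem riccati_div_sub {K : Type*} [Field K] {k A w₁ w₂ w W₁ W₂ W : K}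
    (h₁ : W₁ * (1 - k * w₁) = A + w₁) (h₂ : W₂ * (1 - k * w₂) = A + w₂)
    (h : W * (1 - k * w) = A + w)
    (hw : w - w₁ ≠ 0) (hW : W - W₁ ≠ 0) (hw₂ : 1 - k * w₂ ≠ 0) :
    (W₂ - W) / (W - W₁) = (1 - k * w₁) / (1 - k * w₂) * ((w₂ - w) / (w - w₁)) := by
  rw [div_mul_div_comm, div_eq_div_iff hW (mul_ne_zero hw₂ hw)]
  linear_combination (w - w₁) * riccati_sub_mul h h₂ + (w₂ - w) * riccati_sub_mul h h₁

theorem stmt_14_general (q : ℂ) (A f₁ f₂ f : ℂ → ℂ)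
    (h1 : ∀ z, f₁ (q * z) * (1 - (q - 1) * z * f₁ z) = A z + f₁ z)
    (h2 : ∀ z, f₂ (q * z) * (1 - (q - 1) * z * f₂ z) = A z + f₂ z)
    (hf : ∀ z, f (q * z) * (1 - (q - 1) * z * f z) = A z + f z)
    (h : ℂ → ℂ) (hdef : ∀ z, h z = (f₂ z - f z) / (f z - f₁ z)) :
    ∀ z, f z - f₁ z ≠ 0 → f (q * z) - f₁ (q * z) ≠ 0 →
      1 - (q - 1) * z * f₂ z ≠ 0 →
      h (q * z) = (1 - (q - 1) * z * f₁ z) / (1 - (q - 1) * z * f₂ z) * h z := by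
  intro z hw hW hw₂
  rw [hdef, hdef]
  exact riccati_div_sub (h1 z) (h2 z) (hf z) hw hW hw₂

theorem stmt_14 (q : ℂ) (hq0 : q ≠ 0) (hq1 : q ≠ 1) (A f₁ f₂ f : ℂ → ℂ)
    (hne : f₁ ≠ f₂) (hf1 : f ≠ f₁) (hf2 : f ≠ f₂)
    (h1 : ∀ z, f₁ (q * z) * (1 - (q - 1) * z * f₁ z) = A z + f₁ z)
    (h2 : ∀ z, f₂ (q * z) * (1 - (q - 1) * z * f₂ z) = A z + f₂ z)
    (hf : ∀ z, f (q * z) * (1 - (q - 1) * z * f z) = A z + f z)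
    (h : ℂ → ℂ) (hdef : ∀ z, h z = (f₂ z - f z) / (f z - f₁ z)) :
    ∀ z, f z - f₁ z ≠ 0 → f (q * z) - f₁ (q * z) ≠ 0 →
      1 - (q - 1) * z * f₂ z ≠ 0 →
      h (q * z) = (1 - (q - 1) * z * f₁ z) / (1 - (q - 1) * z * f₂ z) * h z :=
  stmt_14_general q A f₁ f₂ f h1 h2 hf h hdef
end
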